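/- Let α,β∈ℝ with α≠0 and β≠0, let c₁,c₂∈ℝ, and let V(q₁,q₂)=c₁·exp(−4q₁/β)+c₂·exp(4q₂/α) on ℝ⁴. Then the Hamiltonian flow preserves the bivector P̃ with entries P̃¹²=αp₁+βp₂, P̃¹³=p₁²−p₂²−α ∂V/∂q₂+2V, P̃¹⁴=2p₁p₂−β ∂V/∂q₂, P̃²³=2p₁p₂+α ∂V/∂q₁, P̃²⁴=−p₁²+p₂²+α ∂V/∂q₂−2V, P̃³⁴=2p₁ ∂V/∂q₂ − 2p₂ ∂V/∂q₁: the Lie derivative of P̃ along the Hamiltonian vector field X vanishes identically on ℝ⁴. -/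

import Mathlib

open Real

noncomputable section

/-- Partial derivative of `F` in the `k`-th coordinate direction at `x`. -/
def pd (F : (Fin 4 → ℝ) → ℝ) (k : Fin 4) (x : Fin 4 → ℝ) : ℝ :=
  fderiv ℝ F x (Pi.single k 1)

/-- The canonical Poisson bivector on ℝ⁴. -/
def Pcan : Matrix (Fin 4) (Fin 4) ℝ :=
  !![0, 0, 1, 0; 0, 0, 0, 1; -1, 0, 0, 0; 0, -1, 0, 0]

/-- Lie derivative of a bivector field `T` along a vector field `Xf`:
`(L_X T)^{ij} = Σ_k ( X^k ∂T^{ij}/∂x^k − T^{kj} ∂X^i/∂x^k − T^{ik} ∂X^j/∂x^k )`. -/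
def lieDerivBiv (Xf : (Fin 4 → ℝ) → Fin 4 → ℝ)
    (T : (Fin 4 → ℝ) → Matrix (Fin 4) (Fin 4) ℝ)
    (i j : Fin 4) (x : Fin 4 → ℝ) : ℝ :=
  ∑ k, (Xf x k * pd (fun y => T y i j) k x
      - T x k j * pd (fun y => Xf y i) k x
      - T x i k * pd (fun y => Xf y j) k x)

/-- Lie derivative of a 2-form `ω` along a vector field `Xf`:
`(L_X ω)_{ij} = Σ_k ( X^k ∂ω_{ij}/∂x^k + ω_{kj} ∂X^k/∂x^i + ω_{ik} ∂X^k/∂x^j )`. -/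
def lieDerivForm (Xf : (Fin 4 → ℝ) → Fin 4 → ℝ)
    (ω : (Fin 4 → ℝ) → Matrix (Fin 4) (Fin 4) ℝ)
    (i j : Fin 4) (x : Fin 4 → ℝ) : ℝ :=
  ∑ k, (Xf x k * pd (fun y => ω y i j) k x
      + ω x k j * pd (fun y => Xf y k) i x
      + ω x i k * pd (fun y => Xf y k) j x)

/-- The Jacobiator of a bivector field `A`; `A` satisfies the Jacobi identity iff it
vanishes for all indices `i j k`. -/
def jac (A : (Fin 4 → ℝ) → Matrix (Fin 4) (Fin 4) ℝ)
    (i j k : Fin 4) (x : Fin 4 → ℝ) : ℝ :=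
  ∑ l, (A x l i * pd (fun y => A y j k) l x
      + A x l j * pd (fun y => A y k i) l x
      + A x l k * pd (fun y => A y i j) l x)

/-- The mixed Schouten bracket expression of two bivector fields `A` and `B`. -/
def mixedSchouten (A B : (Fin 4 → ℝ) → Matrix (Fin 4) (Fin 4) ℝ)
    (i j k : Fin 4) (x : Fin 4 → ℝ) : ℝ :=
  ∑ l, (A x l i * pd (fun y => B y j k) l x
      + A x l j * pd (fun y => B y k i) l x
      + A x l k * pd (fun y => B y i j) l x
      + B x l i * pd (fun y => A y j k) l x
      + B x l j * pd (fun y => A y k i) l x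
      + B x l k * pd (fun y => A y i j) l x)

/-- The Toda-type potential `V = c₁ exp(−4q₁/β) + c₂ exp(4q₂/α)`. -/
def VT (α β c₁ c₂ : ℝ) (x : Fin 4 → ℝ) : ℝ :=
  c₁ * Real.exp (-4 * x 0 / β) + c₂ * Real.exp (4 * x 1 / α)

/-- The Hamiltonian vector field `X = (p₁, p₂, −∂V/∂q₁, −∂V/∂q₂)`. -/
def XT (α β c₁ c₂ : ℝ) (x : Fin 4 → ℝ) : Fin 4 → ℝ :=
  ![x 2, x 3, -(pd (VT α β c₁ c₂) 0 x), -(pd (VT α β c₁ c₂) 1 x)]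

/-- The invariant bivector `P̃` associated with the potential. -/
def PtT (α β c₁ c₂ : ℝ) (x : Fin 4 → ℝ) : Matrix (Fin 4) (Fin 4) ℝ :=
  let p1 := x 2; let p2 := x 3
  let V1 := pd (VT α β c₁ c₂) 0 x
  let V2 := pd (VT α β c₁ c₂) 1 x
  let v := VT α β c₁ c₂ x
  let e12 := α * p1 + β * p2
  let e13 := p1 ^ 2 - p2 ^ 2 - α * V2 + 2 * v
  let e14 := 2 * p1 * p2 - β * V2
  let e23 := 2 * p1 * p2 + α * V1
  let e24 := -p1 ^ 2 + p2 ^ 2 + α * V2 - 2 * v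
  let e34 := 2 * p1 * V2 - 2 * p2 * V1
  !![0, e12, e13, e14;
     -(e12), 0, e23, e24;
     -(e13), -(e23), 0, e34;
     -(e14), -(e24), -(e34), 0]

/-!
Since `P̃` is antisymmetric, so is `L_X P̃` (for any vector field `X`), and only the six entries
above the diagonal need checking. With `E = exp (-4 q₁ / β)` and `W = exp (4 q₂ / α)` the forces are
`∂V/∂q₁ = -(4 c₁ / β) E` and `∂V/∂q₂ = (4 c₂ / α) W`; as both exponentials reproduce themselves under
differentiation, every entry of `L_X P̃` is a polynomial in `p₁, p₂, E, W` with coefficients in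
`α, β, α⁻¹, β⁻¹`, and the coefficients cancel identically.
-/

open scoped Matrix

section PartialDerivative

variable {f g : (Fin 4 → ℝ) → ℝ} {k : Fin 4} {x : Fin 4 → ℝ}

lemma pd_add (hf : DifferentiableAt ℝ f x) (hg : DifferentiableAt ℝ g x) :
    pd (fun y => f y + g y) k x = pd f k x + pd g k x := by
  rw [pd, fderiv_fun_add hf hg]; rfl

lemma pd_sub (hf : DifferentiableAt ℝ f x) (hg : DifferentiableAt ℝ g x) :
    pd (fun y => f y - g y) k x = pd f k x - pd g k x := by
  rw [pd, fderiv_fun_sub hf hg]; rfl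

lemma pd_neg : pd (fun y => -f y) k x = -pd f k x := by
  rw [pd, fderiv_fun_neg]; rfl

lemma pd_mul (hf : DifferentiableAt ℝ f x) (hg : DifferentiableAt ℝ g x) :
    pd (fun y => f y * g y) k x = f x * pd g k x + pd f k x * g x := by
  rw [pd, fderiv_fun_mul hf hg]; simp [pd, mul_comm]

lemma pd_const (c : ℝ) : pd (fun _ => c) k x = 0 := by
  simp [pd]

lemma pd_div_const (hf : DifferentiableAt ℝ f x) (c : ℝ) :
    pd (fun y => f y / c) k x = pd f k x / c := by
  simp_rw [div_eq_mul_inv]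
  rw [pd_mul hf (differentiableAt_const _), pd_const]
  ring

lemma pd_pow (hf : DifferentiableAt ℝ f x) (n : ℕ) :
    pd (fun y => f y ^ n) k x = n * f x ^ (n - 1) * pd f k x := by
  rw [pd, fderiv_fun_pow n hf]; simp [pd, mul_assoc]

lemma pd_exp (hf : DifferentiableAt ℝ f x) :
    pd (fun y => Real.exp (f y)) k x = Real.exp (f x) * pd f k x := by
  rw [pd, fderiv_exp hf]; simp [pd]

lemma pd_apply (j : Fin 4) : pd (fun y => y j) k x = if k = j then 1 else 0 := by
  rw [pd, fderiv_apply differentiableAt_id]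
  simp [Pi.single_apply, eq_comm]

end PartialDerivative

lemma pd_VT_zero (α β c₁ c₂ : ℝ) (x : Fin 4 → ℝ) :
    pd (VT α β c₁ c₂) 0 x = -(4 * c₁ / β) * Real.exp (-4 * x 0 / β) := by
  unfold VT
  simp (disch := fun_prop) only [pd_add, pd_mul, pd_exp, pd_div_const, pd_apply, pd_const,
    zero_ne_one, ↓reduceIte]
  ring

lemma pd_VT_one (α β c₁ c₂ : ℝ) (x : Fin 4 → ℝ) :
    pd (VT α β c₁ c₂) 1 x = 4 * c₂ / α * Real.exp (4 * x 1 / α) := by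
  unfold VT
  simp (disch := fun_prop) only [pd_add, pd_mul, pd_exp, pd_div_const, pd_apply, pd_const,
    one_ne_zero, ↓reduceIte]
  ring

section Antisymmetric

variable {X : (Fin 4 → ℝ) → Fin 4 → ℝ} {T : (Fin 4 → ℝ) → Matrix (Fin 4) (Fin 4) ℝ}

lemma lieDerivBiv_swap (hT : ∀ y, (T y)ᵀ = -T y) (i j : Fin 4) (x : Fin 4 → ℝ) :
    lieDerivBiv X T j i x = -lieDerivBiv X T i j x := by
  have hT' : ∀ y k l, T y l k = -T y k l := fun y k l => by
    rw [← Matrix.neg_apply, ← hT, Matrix.transpose_apply]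
  have hji : (fun y => T y j i) = fun y => -T y i j := funext fun y => hT' y i j
  simp only [lieDerivBiv, hji, pd_neg, ← Finset.sum_neg_distrib]
  refine Finset.sum_congr rfl fun k _ => ?_
  rw [hT' x k i, hT' x j k]
  ring

lemma lieDerivBiv_self (hT : ∀ y, (T y)ᵀ = -T y) (i : Fin 4) (x : Fin 4 → ℝ) :
    lieDerivBiv X T i i x = 0 :=
  self_eq_neg.mp (lieDerivBiv_swap hT i i x)

end Antisymmetric

lemma PtT_transpose (α β c₁ c₂ : ℝ) (x : Fin 4 → ℝ) :
    (PtT α β c₁ c₂ x)ᵀ = -PtT α β c₁ c₂ x := by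
  ext i j
  fin_cases i <;> fin_cases j <;> simp [PtT]

lemma lieDerivBiv_XT_PtT_of_lt (α β : ℝ) (hα : α ≠ 0) (hβ : β ≠ 0) (c₁ c₂ : ℝ) {i j : Fin 4}
    (hij : i < j) (x : Fin 4 → ℝ) :
    lieDerivBiv (XT α β c₁ c₂) (PtT α β c₁ c₂) i j x = 0 := by
  fin_cases i <;> fin_cases j <;> simp at hij <;>
  · simp only [Fin.zero_eta, Fin.mk_one, Fin.reduceFinMk, lieDerivBiv, Fin.sum_univ_four, XT, PtT,
      pd_VT_zero, pd_VT_one, VT, Matrix.of_apply, Matrix.cons_val', Matrix.cons_val_zero,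
      Matrix.cons_val_one, Matrix.cons_val_two, Matrix.cons_val_three, Matrix.head_cons,
      Matrix.tail_cons, Matrix.empty_val', Matrix.cons_val_fin_one, Matrix.head_fin_const]
    simp (disch := fun_prop) only [pd_add, pd_sub, pd_neg, pd_mul, pd_pow, pd_exp, pd_div_const,
      pd_apply, pd_const, Fin.reduceEq, zero_ne_one, one_ne_zero, ↓reduceIte, Nat.cast_ofNat,
      Nat.add_one_sub_one, pow_one]
    field_simp
    ring

/-- for `V = c₁ exp(−4q₁/β) + c₂ exp(4q₂/α)`, the Hamiltonian flow preserves
`P̃`: `L_X P̃ = 0` on all of ℝ⁴. -/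
theorem statement16 (α β : ℝ) (hα : α ≠ 0) (hβ : β ≠ 0) (c₁ c₂ : ℝ) :
    ∀ (i j : Fin 4) (x : Fin 4 → ℝ),
      lieDerivBiv (XT α β c₁ c₂) (PtT α β c₁ c₂) i j x = 0 := by
  intro i j x
  have hP := PtT_transpose α β c₁ c₂
  rcases lt_trichotomy i j with hij | rfl | hji
  · exact lieDerivBiv_XT_PtT_of_lt α β hα hβ c₁ c₂ hij x
  · exact lieDerivBiv_self hP i x
  · rw [lieDerivBiv_swap hP, lieDerivBiv_XT_PtT_of_lt α β hα hβ c₁ c₂ hji x, neg_zero]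

end
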